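/- Under a constant market price of risk, the initial mean-variance value functions of the two strategies are U(Ŵ) = W₀e^{rT} + (1/(2γ))(e^{λ²T} − 1) and U(W*) = W₀e^{rT} + (1/(2γ))λ²T; if λ ≠ 0 then the precommitment investor owns the advantage in terms of the initial value function: U(Ŵ) > U(W*). -/

import Mathlib

/-!
Both terminal wealths are affine in a function of the Gaussian variable `X`:
`Ŵ = c - k e^{-λX}` and `W* = c' - k' X`. The mean and variance of `e^{tX}` are read off the
Gaussian moment generating function `E e^{tX} = e^{Tt²/2}`, which gives the two values; their
difference is `(e^{λ²T} - 1 - λ²T) / (2γ)`, positive since `e^x > 1 + x` for `x ≠ 0`.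
-/

open MeasureTheory ProbabilityTheory Real
open scoped NNReal

noncomputable def meanVariance {Ω : Type*} [MeasurableSpace Ω] (P : Measure Ω) (γ : ℝ)
    (W : Ω → ℝ) : ℝ :=
  P[W] - γ / 2 * Var[W; P]

section

variable {Ω : Type*} [MeasurableSpace Ω] {P : Measure Ω} [IsProbabilityMeasure P]

lemma meanVariance_const_sub_mul {f : Ω → ℝ} (hf : Integrable f P) (γ c k : ℝ) :
    meanVariance P γ (fun ω => c - k * f ω) = c - k * P[f] - γ / 2 * (k ^ 2 * Var[f; P]) := by
  rw [meanVariance, integral_sub (integrable_const c) (hf.const_mul k), integral_const_mul,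
    variance_const_sub (hf.aestronglyMeasurable.const_mul k), variance_const_mul]
  simp

lemma variance_exp_mul_eq_mgf {X : Ω → ℝ} (hX : AEMeasurable X P) {t : ℝ}
    (h : Integrable (fun ω => exp (2 * t * X ω)) P) :
    Var[fun ω => exp (t * X ω); P] = mgf X P (2 * t) - mgf X P t ^ 2 := by
  have hsq : ∀ ω, exp (t * X ω) ^ 2 = exp (2 * t * X ω) := fun ω => by
    rw [← exp_nat_mul]; push_cast; ring_nf
  have hL2 : MemLp (fun ω => exp (t * X ω)) 2 P := by
    rw [memLp_two_iff_integrable_sq (by fun_prop)]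
    simpa only [hsq] using h
  rw [variance_eq_sub hL2]
  simp only [Pi.pow_apply, hsq]
  rfl

lemma integrable_exp_mul_of_map_eq_gaussianReal {X : Ω → ℝ} {μ : ℝ} {v : ℝ≥0}
    (hX : P.map X = gaussianReal μ v) (t : ℝ) : Integrable (fun ω => exp (t * X ω)) P := by
  rw [← mgf_pos_iff, mgf_gaussianReal hX]
  exact exp_pos _

lemma variance_exp_mul_of_map_eq_gaussianReal {X : Ω → ℝ} {μ : ℝ} {v : ℝ≥0}
    (hX : P.map X = gaussianReal μ v) (t : ℝ) :
    Var[fun ω => exp (t * X ω); P] = exp (2 * μ * t + v * t ^ 2) * (exp (v * t ^ 2) - 1) := by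
  have hXm : AEMeasurable X P := aemeasurable_of_map_neZero (by rw [hX]; infer_instance)
  rw [variance_exp_mul_eq_mgf hXm (integrable_exp_mul_of_map_eq_gaussianReal hX _),
    mgf_gaussianReal hX, mgf_gaussianReal hX, ← exp_nat_mul, mul_sub, mul_one, ← exp_add]
  push_cast
  ring_nf

lemma meanVariance_const_sub_mul_of_map_eq_gaussianReal {X : Ω → ℝ} {μ : ℝ} {v : ℝ≥0}
    (hX : P.map X = gaussianReal μ v) (γ c k : ℝ) :
    meanVariance P γ (fun ω => c - k * X ω) = c - k * μ - γ / 2 * (k ^ 2 * v) := by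
  have hlaw : HasLaw X (gaussianReal μ v) P :=
    ⟨aemeasurable_of_map_neZero (by rw [hX]; infer_instance), hX⟩
  have hint : Integrable X P := by
    refine (integrable_map_measure aestronglyMeasurable_id hlaw.aemeasurable).mp ?_
    rw [hX]
    exact (memLp_id_gaussianReal 1).integrable le_rfl
  rw [meanVariance_const_sub_mul hint, hlaw.integral_eq, hlaw.variance_eq,
    integral_id_gaussianReal, variance_id_gaussianReal]

lemma meanVariance_const_sub_mul_exp_of_map_eq_gaussianReal {X : Ω → ℝ} {μ : ℝ} {v : ℝ≥0}
    (hX : P.map X = gaussianReal μ v) (γ c k t : ℝ) :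
    meanVariance P γ (fun ω => c - k * exp (t * X ω))
      = c - k * exp (μ * t + v * t ^ 2 / 2)
        - γ / 2 * (k ^ 2 * (exp (2 * μ * t + v * t ^ 2) * (exp (v * t ^ 2) - 1))) := by
  rw [meanVariance_const_sub_mul (integrable_exp_mul_of_map_eq_gaussianReal hX t),
    variance_exp_mul_of_map_eq_gaussianReal hX, ← mgf_gaussianReal hX]
  rfl

end

theorem constant_sharpe_value_function_comparison_general
    {Ω : Type*} [MeasurableSpace Ω] (P : Measure Ω) [IsProbabilityMeasure P]
    (T r γ W₀ l : ℝ) (hT : 0 < T) (hγ : 0 < γ)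
    (X : Ω → ℝ)
    (hlaw : P.map X = gaussianReal 0 T.toNNReal)
    (What : Ω → ℝ)
    (hWhat : ∀ ω, What ω = W₀ * exp (r * T) + (1 / γ) * exp (l ^ 2 * T)
        - (1 / γ) * exp (-(l ^ 2 * T / 2) - l * X ω))
    (Wstar : Ω → ℝ)
    (hWstar : ∀ ω, Wstar ω = W₀ * exp (r * T) + (1 / γ) * l ^ 2 * T
        - (1 / γ) * l * X ω)
    (U : (Ω → ℝ) → ℝ)
    (hU : ∀ W : Ω → ℝ, U W = (∫ ω, W ω ∂P) - (γ / 2) * variance W P) :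
    U What = W₀ * exp (r * T) + (1 / (2 * γ)) * (exp (l ^ 2 * T) - 1)
      ∧ U Wstar = W₀ * exp (r * T) + (1 / (2 * γ)) * (l ^ 2 * T)
      ∧ (l ≠ 0 → U Wstar < U What) := by
  have hUmv : U = meanVariance P γ := funext hU
  have hvar : ((T.toNNReal : ℝ≥0) : ℝ) = T := coe_toNNReal T hT.le
  have hWhat' : What = fun ω => (W₀ * exp (r * T) + exp (l ^ 2 * T) / γ)
      - exp (-(l ^ 2 * T / 2)) / γ * exp (-l * X ω) := by
    funext ω
    rw [hWhat, sub_eq_add_neg (-(l ^ 2 * T / 2)), exp_add]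
    ring_nf
  have hWstar' : Wstar = fun ω => (W₀ * exp (r * T) + l ^ 2 * T / γ) - l / γ * X ω := by
    funext ω
    rw [hWstar]
    ring
  have hsq : exp (l ^ 2 * T) = exp (l ^ 2 * T / 2) ^ 2 := by
    rw [← exp_nat_mul]
    ring_nf
  have hUWhat : U What = W₀ * exp (r * T) + (1 / (2 * γ)) * (exp (l ^ 2 * T) - 1) := by
    rw [hUmv, hWhat', meanVariance_const_sub_mul_exp_of_map_eq_gaussianReal hlaw, hvar,
      show (0 : ℝ) * -l + T * (-l) ^ 2 / 2 = l ^ 2 * T / 2 by ring,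
      show 2 * 0 * -l + T * (-l) ^ 2 = l ^ 2 * T by ring,
      show T * (-l) ^ 2 = l ^ 2 * T by ring, exp_neg, hsq]
    field_simp
    ring
  have hUWstar : U Wstar = W₀ * exp (r * T) + (1 / (2 * γ)) * (l ^ 2 * T) := by
    rw [hUmv, hWstar', meanVariance_const_sub_mul_of_map_eq_gaussianReal hlaw, hvar]
    field_simp
    ring
  refine ⟨hUWhat, hUWstar, fun hl => ?_⟩
  rw [hUWhat, hUWstar, add_lt_add_iff_left]
  gcongr
  linarith [add_one_lt_exp (mul_ne_zero (pow_ne_zero 2 hl) hT.ne')]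

/-- Under a constant market price of risk `l = (μ − r)/σ`, the initial
mean-variance value functions `U(W) = E[W] − (γ/2)Var[W]` of the two
strategies are `U(Ŵ) = W₀e^{rT} + (1/(2γ))(e^{l²T} − 1)` and
`U(W*) = W₀e^{rT} + (1/(2γ))l²T`; if `l ≠ 0` then the precommitment investor
owns the advantage in terms of the initial value function: `U(Ŵ) > U(W*)`. -/
theorem constant_sharpe_value_function_comparison
    {Ω : Type*} [MeasurableSpace Ω] (P : Measure Ω) [IsProbabilityMeasure P]
    (T r γ W₀ l : ℝ) (hT : 0 < T) (hγ : 0 < γ)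
    (X : Ω → ℝ) (hX : Measurable X)
    (hlaw : P.map X = gaussianReal 0 T.toNNReal)
    (What : Ω → ℝ)
    (hWhat : ∀ ω, What ω = W₀ * exp (r * T) + (1 / γ) * exp (l ^ 2 * T)
        - (1 / γ) * exp (-(l ^ 2 * T / 2) - l * X ω))
    (Wstar : Ω → ℝ)
    (hWstar : ∀ ω, Wstar ω = W₀ * exp (r * T) + (1 / γ) * l ^ 2 * T
        - (1 / γ) * l * X ω)
    (U : (Ω → ℝ) → ℝ)
    (hU : ∀ W : Ω → ℝ, U W = (∫ ω, W ω ∂P) - (γ / 2) * variance W P) :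
    U What = W₀ * exp (r * T) + (1 / (2 * γ)) * (exp (l ^ 2 * T) - 1)
      ∧ U Wstar = W₀ * exp (r * T) + (1 / (2 * γ)) * (l ^ 2 * T)
      ∧ (l ≠ 0 → U Wstar < U What) :=
  constant_sharpe_value_function_comparison_general P T r γ W₀ l hT hγ X hlaw What hWhat Wstar
    hWstar U hU
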